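/- arXiv:1611.01736 — 9 statements merged into one kernel-verified Lean document; each statement's English description precedes it below -/
import Mathlib

section
/- Let A be a vector space over ℂ with a bilinear product, q a fixed complex number, and define on L(A) = A ⊗ ℂ[t,t⁻¹] the bracket [a[m], b[n]] = (m+q)(ab)[m+n] − (n+q)(ba)[m+n], where a[m] := a ⊗ t^{m+1}. Then this bracket satisfies the Jacobi identity (together with antisymmetry, making L(A) a Lie algebra) if and only if A is a Novikov algebra, i.e. (ab)c − a(bc) = (ba)c − b(ac) and (ab)c = (ac)b for all a, b, c ∈ A. -/
/-!
The Jacobiator of homogeneous elements `a[m], b[n], c[p]` sits in degree `m + n + p`, and its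
coefficient there is a quadratic polynomial in `m, n, p` whose coefficients are left-symmetry and
right-commutativity defects of `A`. Its second difference in `m` isolates a right-commutativity
defect and its mixed difference in `m, n` a left-symmetry defect, so it vanishes at all integer
degrees exactly when `A` is Novikov. Antisymmetry holds for every product, and both identities
extend from homogeneous elements by bilinearity.
-/

/-- The affinization bracket on `L(A) = A ⊗ ℂ[t,t⁻¹]` (modelled as finitely
supported functions `ℤ →₀ A`, with `a[m] = single m a`):
`[a[m], b[n]] = (m+q)(ab)[m+n] − (n+q)(ba)[m+n]`. -/
noncomputable def affBracket {A : Type*} [AddCommGroup A] [Module ℂ A]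
    (q : ℂ) (mul : A →ₗ[ℂ] A →ₗ[ℂ] A) (f g : ℤ →₀ A) : ℤ →₀ A :=
  f.sum fun m a => g.sum fun n b =>
    Finsupp.single (m + n) ((((m : ℂ) + q) • mul a b) - (((n : ℂ) + q) • mul b a))

namespace Finsupp

variable {R ι M : Type*} [CommSemiring R] [AddCommGroup M] [Module R M]
  (B : (ι →₀ M) →ₗ[R] (ι →₀ M) →ₗ[R] (ι →₀ M))

theorem bilinear_antisymm_of_single
    (hB : ∀ m n a b, B (single m a) (single n b) = -B (single n b) (single m a))
    (f g : ι →₀ M) : B f g = -B g f := by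
  have : B = -B.flip := by
    ext m a n b : 4
    exact hB m n a b
  exact LinearMap.congr_fun₂ this f g

theorem bilinear_jacobi_of_single
    (hB : ∀ m n p a b c,
      B (single m a) (B (single n b) (single p c)) + B (single p c) (B (single m a) (single n b)) +
        B (single n b) (B (single p c) (single m a)) = 0)
    (f g h : ι →₀ M) : B f (B g h) + B h (B f g) + B g (B h f) = 0 := by
  induction f using Finsupp.induction_linear generalizing g h with
  | zero => simp
  | add f₁ f₂ ih₁ ih₂ =>
    simp only [map_add, LinearMap.add_apply]
    linear_combination (norm := abel) ih₁ g h + ih₂ g h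
  | single m a =>
    induction g using Finsupp.induction_linear generalizing h with
    | zero => simp
    | add g₁ g₂ ih₁ ih₂ =>
      simp only [map_add, LinearMap.add_apply]
      linear_combination (norm := abel) ih₁ h + ih₂ h
    | single n b =>
      induction h using Finsupp.induction_linear with
      | zero => simp
      | add h₁ h₂ ih₁ ih₂ =>
        simp only [map_add, LinearMap.add_apply]
        linear_combination (norm := abel) ih₁ + ih₂
      | single p c => exact hB m n p a b c

end Finsupp

section Affinization

variable {A : Type*} [AddCommGroup A] [Module ℂ A] (q : ℂ) (mul : A →ₗ[ℂ] A →ₗ[ℂ] A)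

noncomputable def affBracketₗ : (ℤ →₀ A) →ₗ[ℂ] (ℤ →₀ A) →ₗ[ℂ] (ℤ →₀ A) :=
  Finsupp.lsum ℂ fun m => LinearMap.flip <| Finsupp.lsum ℂ fun n =>
    LinearMap.flip <| ((m : ℂ) + q) • mul.compr₂ (Finsupp.lsingle (m + n))
      - ((n : ℂ) + q) • mul.flip.compr₂ (Finsupp.lsingle (m + n))

theorem affBracketₗ_apply (f g : ℤ →₀ A) : affBracketₗ q mul f g = affBracket q mul f g := by
  simp [affBracketₗ, affBracket]

theorem affBracket_single_single (m n : ℤ) (a b : A) :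
    affBracket q mul (Finsupp.single m a) (Finsupp.single n b) =
      Finsupp.single (m + n) ((((m : ℂ) + q) • mul a b) - (((n : ℂ) + q) • mul b a)) := by
  simp [affBracket]

theorem affBracket_antisymm (f g : ℤ →₀ A) : affBracket q mul f g = -affBracket q mul g f := by
  simp only [← affBracketₗ_apply]
  refine Finsupp.bilinear_antisymm_of_single _ (fun m n a b => ?_) f g
  simp only [affBracketₗ_apply, affBracket_single_single, add_comm n m, ← Finsupp.single_neg]
  congr 1
  abel

def leftSymmDefect (a b c : A) : A :=
  mul (mul a b) c - mul a (mul b c) - (mul (mul b a) c - mul b (mul a c))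

def rightCommDefect (a b c : A) : A := mul (mul a b) c - mul (mul a c) b

def jacobiCoeff (m n p : ℤ) (a b c : A) : A :=
  -((m + q) * (n + q)) • leftSymmDefect mul a b c - ((n + q) * (p + q)) • leftSymmDefect mul b c a
    - ((p + q) * (m + q)) • leftSymmDefect mul c a b + (m * (m + q)) • rightCommDefect mul a c b
    + (n * (n + q)) • rightCommDefect mul b a c + (p * (p + q)) • rightCommDefect mul c b a

theorem affBracket_jacobi_single (m n p : ℤ) (a b c : A) :
    affBracket q mul (Finsupp.single m a)
        (affBracket q mul (Finsupp.single n b) (Finsupp.single p c)) +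
      affBracket q mul (Finsupp.single p c)
        (affBracket q mul (Finsupp.single m a) (Finsupp.single n b)) +
      affBracket q mul (Finsupp.single n b)
        (affBracket q mul (Finsupp.single p c) (Finsupp.single m a)) =
      Finsupp.single (m + n + p) (jacobiCoeff q mul m n p a b c) := by
  simp only [affBracket_single_single]
  rw [show m + (n + p) = m + n + p by ring, show p + (m + n) = m + n + p by ring,
    show n + (p + m) = m + n + p by ring, ← Finsupp.single_add, ← Finsupp.single_add]
  congr 1
  simp only [jacobiCoeff, leftSymmDefect, rightCommDefect, map_sub, map_smul,
    LinearMap.sub_apply, LinearMap.smul_apply]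
  push_cast
  module

theorem two_smul_rightCommDefect_eq_jacobiCoeff (a b c : A) :
    (2 : ℂ) • rightCommDefect mul a b c =
      jacobiCoeff q mul 2 0 0 a c b - (2 : ℂ) • jacobiCoeff q mul 1 0 0 a c b
        + jacobiCoeff q mul 0 0 0 a c b := by
  simp only [jacobiCoeff]
  push_cast
  module

theorem leftSymmDefect_eq_jacobiCoeff (a b c : A) :
    leftSymmDefect mul a b c =
      -(jacobiCoeff q mul 1 1 0 a b c - jacobiCoeff q mul 1 0 0 a b c
        - jacobiCoeff q mul 0 1 0 a b c + jacobiCoeff q mul 0 0 0 a b c) := by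
  simp only [jacobiCoeff]
  push_cast
  module

def IsNovikov : Prop :=
  (∀ a b c : A, mul (mul a b) c - mul a (mul b c) = mul (mul b a) c - mul b (mul a c)) ∧
    ∀ a b c : A, mul (mul a b) c = mul (mul a c) b

theorem forall_jacobiCoeff_eq_zero_iff :
    (∀ (m n p : ℤ) (a b c : A), jacobiCoeff q mul m n p a b c = 0) ↔ IsNovikov mul := by
  constructor
  · intro hJ
    constructor
    · intro a b c
      rw [← sub_eq_zero, ← sub_eq_zero, ← leftSymmDefect]
      simp [leftSymmDefect_eq_jacobiCoeff q, hJ]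
    · intro a b c
      rw [← sub_eq_zero, ← rightCommDefect]
      simpa [hJ] using two_smul_rightCommDefect_eq_jacobiCoeff q mul a b c
  · rintro ⟨hL, hR⟩ m n p a b c
    have hL' : ∀ a b c, leftSymmDefect mul a b c = 0 := fun a b c => sub_eq_zero.2 (hL a b c)
    have hR' : ∀ a b c, rightCommDefect mul a b c = 0 := fun a b c => sub_eq_zero.2 (hR a b c)
    simp [jacobiCoeff, hL', hR']

theorem affBracket_jacobi_iff :
    (∀ f g h : ℤ →₀ A,
        affBracket q mul f (affBracket q mul g h) + affBracket q mul h (affBracket q mul f g) +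
          affBracket q mul g (affBracket q mul h f) = 0) ↔
      ∀ (m n p : ℤ) (a b c : A), jacobiCoeff q mul m n p a b c = 0 := by
  constructor
  · intro hjac m n p a b c
    simpa [affBracket_jacobi_single] using
      hjac (Finsupp.single m a) (Finsupp.single n b) (Finsupp.single p c)
  · intro hJ
    simp only [← affBracketₗ_apply]
    refine Finsupp.bilinear_jacobi_of_single _ fun m n p a b c => ?_
    simp only [affBracketₗ_apply, affBracket_jacobi_single, hJ, Finsupp.single_zero]

end Affinization

/-- The bracket makes `L(A)` a Lie algebra (antisymmetry and the Jacobi identity hold)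
if and only if `A` is a Novikov algebra. -/
theorem stmt0 {A : Type*} [AddCommGroup A] [Module ℂ A]
    (q : ℂ) (mul : A →ₗ[ℂ] A →ₗ[ℂ] A) :
    ((∀ f g : ℤ →₀ A, affBracket q mul f g = - affBracket q mul g f) ∧
      (∀ f g h : ℤ →₀ A,
        affBracket q mul f (affBracket q mul g h) +
          affBracket q mul h (affBracket q mul f g) +
          affBracket q mul g (affBracket q mul h f) = 0)) ↔
    ((∀ a b c : A,
        mul (mul a b) c - mul a (mul b c) = mul (mul b a) c - mul b (mul a c)) ∧
      (∀ a b c : A, mul (mul a b) c = mul (mul a c) b)) := by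
  rw [and_iff_right (affBracket_antisymm q mul)]
  exact (affBracket_jacobi_iff q mul).trans (forall_jacobiCoeff_eq_zero_iff q mul)
end

section
/- If A is a Novikov algebra over ℂ and q ∈ ℂ, then for all a, b, c ∈ A and m, n, k ∈ ℤ, the expression Θ₁ + Θ₂ + Θ₃ vanishes, where Θ₁ = (n+q)(m+q)a(bc) − (n+q)(n+k+q)(bc)a + (k+q)(n+k+q)(cb)a − (k+q)(m+q)a(cb), Θ₂ = (m+q)(k+q)c(ab) − (m+q)(m+n+q)(ab)c + (n+q)(m+n+q)(ba)c − (n+q)(k+q)c(ba), and Θ₃ = (k+q)(n+q)b(ca) − (k+q)(m+k+q)(ca)b + (m+q)(m+k+q)(ac)b − (m+q)(n+q)b(ac). -/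
/-- If `A` is a Novikov algebra over `ℂ` and `q ∈ ℂ`, then for all `a b c ∈ A` and
integers `m n k`, `Θ₁ + Θ₂ + Θ₃ = 0`. -/
theorem stmt1 {A : Type*} [AddCommGroup A] [Module ℂ A]
    (mul : A →ₗ[ℂ] A →ₗ[ℂ] A)
    (hls : ∀ a b c : A,
      mul (mul a b) c - mul a (mul b c) = mul (mul b a) c - mul b (mul a c))
    (hrc : ∀ a b c : A, mul (mul a b) c = mul (mul a c) b)
    (q : ℂ) (a b c : A) (m n k : ℤ) :
    -- Θ₁
    ((((n : ℂ) + q) * ((m : ℂ) + q)) • mul a (mul b c)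
      - (((n : ℂ) + q) * ((n : ℂ) + (k : ℂ) + q)) • mul (mul b c) a
      + (((k : ℂ) + q) * ((n : ℂ) + (k : ℂ) + q)) • mul (mul c b) a
      - (((k : ℂ) + q) * ((m : ℂ) + q)) • mul a (mul c b))
    -- Θ₂
    + ((((m : ℂ) + q) * ((k : ℂ) + q)) • mul c (mul a b)
      - (((m : ℂ) + q) * ((m : ℂ) + (n : ℂ) + q)) • mul (mul a b) c
      + (((n : ℂ) + q) * ((m : ℂ) + (n : ℂ) + q)) • mul (mul b a) c
      - (((n : ℂ) + q) * ((k : ℂ) + q)) • mul c (mul b a))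
    -- Θ₃
    + ((((k : ℂ) + q) * ((n : ℂ) + q)) • mul b (mul c a)
      - (((k : ℂ) + q) * ((m : ℂ) + (k : ℂ) + q)) • mul (mul c a) b
      + (((m : ℂ) + q) * ((m : ℂ) + (k : ℂ) + q)) • mul (mul a c) b
      - (((m : ℂ) + q) * ((n : ℂ) + q)) • mul b (mul a c)) = 0 := by
  linear_combination (norm := module)
    (-(((m : ℂ) + q) * ((n : ℂ) + q))) • hls a b c
    + (-(((n : ℂ) + q) * ((k : ℂ) + q))) • hls b c a
    + ((((m : ℂ) + q) * ((k : ℂ) + q))) • hls a c b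
    + (-(((m : ℂ) + q) * (((m : ℂ) + q) - q))) • hrc a b c
    + ((((n : ℂ) + q) * (((n : ℂ) + q) - q))) • hrc b a c
    + (-(((k : ℂ) + q) * (((k : ℂ) + q) - q))) • hrc c a b
end

section
/- Conversely, if for a bilinear product on a ℂ-vector space A the expression Θ₁ + Θ₂ + Θ₃ (as defined in the affinization Jacobi computation) vanishes for all a, b, c ∈ A and all integers m, n, k, then A satisfies the Novikov identities (ab)c = (ac)b and (ab)c − a(bc) = (ba)c − b(ac). (Proof idea: view Θ₁+Θ₂+Θ₃ as a polynomial in m, n, k and compare coefficients of m² and mn.) -/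
/-- Conversely, if `Θ₁ + Θ₂ + Θ₃ = 0` for all `a b c ∈ A` and all integers `m n k`,
then the bilinear product on `A` satisfies the Novikov identities. -/
theorem stmt2 {A : Type*} [AddCommGroup A] [Module ℂ A]
    (mul : A →ₗ[ℂ] A →ₗ[ℂ] A) (q : ℂ)
    (H : ∀ (a b c : A) (m n k : ℤ),
      -- Θ₁
      ((((n : ℂ) + q) * ((m : ℂ) + q)) • mul a (mul b c)
        - (((n : ℂ) + q) * ((n : ℂ) + (k : ℂ) + q)) • mul (mul b c) a
        + (((k : ℂ) + q) * ((n : ℂ) + (k : ℂ) + q)) • mul (mul c b) a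
        - (((k : ℂ) + q) * ((m : ℂ) + q)) • mul a (mul c b))
      -- Θ₂
      + ((((m : ℂ) + q) * ((k : ℂ) + q)) • mul c (mul a b)
        - (((m : ℂ) + q) * ((m : ℂ) + (n : ℂ) + q)) • mul (mul a b) c
        + (((n : ℂ) + q) * ((m : ℂ) + (n : ℂ) + q)) • mul (mul b a) c
        - (((n : ℂ) + q) * ((k : ℂ) + q)) • mul c (mul b a))
      -- Θ₃
      + ((((k : ℂ) + q) * ((n : ℂ) + q)) • mul b (mul c a)
        - (((k : ℂ) + q) * ((m : ℂ) + (k : ℂ) + q)) • mul (mul c a) b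
        + (((m : ℂ) + q) * ((m : ℂ) + (k : ℂ) + q)) • mul (mul a c) b
        - (((m : ℂ) + q) * ((n : ℂ) + q)) • mul b (mul a c)) = 0) :
    (∀ a b c : A, mul (mul a b) c = mul (mul a c) b) ∧
    (∀ a b c : A,
      mul (mul a b) c - mul a (mul b c) = mul (mul b a) c - mul b (mul a c)) := by
  constructor
  · intro a b c
    have h0 := H a b c 0 0 0
    have h1 := H a b c 1 0 0
    have h2 := H a b c 2 0 0
    push_cast at h0 h1 h2
    linear_combination (norm := module) (-(2:ℂ)⁻¹) • h2 + (1:ℂ) • h1 + (-(2:ℂ)⁻¹) • h0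
  · intro a b c
    have h00 := H a b c 0 0 0
    have h10 := H a b c 1 0 0
    have h01 := H a b c 0 1 0
    have h11 := H a b c 1 1 0
    push_cast at h00 h10 h01 h11
    linear_combination (norm := module) (-1:ℂ) • h11 + (1:ℂ) • h10 + (1:ℂ) • h01 + (-1:ℂ) • h00
end

section
/- For any fixed p, μ ∈ ℂ and θ ∈ ℤ, the ℂ-vector space with basis {L_{α,i} | α, i ∈ ℤ} equipped with the bracket [L_{α,i}, L_{β,j}] = ((i+q)(β+p) − (j+q)(α+p)) L_{α+β, i+j} + (i−j)μ L_{α+β+θ, i+j} is a Lie algebra, for any fixed q ∈ ℂ. -/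
/-!
The bracket is the bilinear extension of its values on the basis vectors `L_{α,i}`, so
antisymmetry and the Jacobi identity, being multilinear in their arguments, need only be checked
on basis vectors. There the Jacobiator of `L_a, L_b, L_c` is supported in the degrees
`a + b + c + (kθ, 0)` for `k = 0, 1, 2`, and each of its three coefficients vanishes by a
polynomial identity.
-/

/-- The bracket of `𝓑(p,q,μ,θ)` on the free `ℂ`-module with basis
`{L_{α,i} | α, i ∈ ℤ}` (modelled as `ℤ × ℤ →₀ ℂ`, `L_{α,i} = single (α,i) 1`):
`[L_{α,i}, L_{β,j}] = ((i+q)(β+p) − (j+q)(α+p)) L_{α+β,i+j} + (i−j)μ L_{α+β+θ,i+j}`. -/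
noncomputable def bBracket (p q μ : ℂ) (θ : ℤ) (f g : ℤ × ℤ →₀ ℂ) : ℤ × ℤ →₀ ℂ :=
  f.sum fun a x => g.sum fun b y =>
    Finsupp.single (a.1 + b.1, a.2 + b.2)
      (x * y * (((a.2 : ℂ) + q) * ((b.1 : ℂ) + p) - ((b.2 : ℂ) + q) * ((a.1 : ℂ) + p)))
    + Finsupp.single (a.1 + b.1 + θ, a.2 + b.2) (x * y * ((a.2 : ℂ) - (b.2 : ℂ)) * μ)

open Finsupp

namespace Finsupp

variable {R α M : Type*} [CommRing R] [AddCommGroup M] [Module R M]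

theorem bilin_antisymm_of_single (B : (α →₀ R) →ₗ[R] (α →₀ R) →ₗ[R] M)
    (h : ∀ a b, B (single a 1) (single b 1) = -B (single b 1) (single a 1)) (f g : α →₀ R) :
    B f g = -B g f := by
  have hB : B.flip = -B := by
    ext a b
    simpa using h b a
  simpa only [LinearMap.flip_apply, LinearMap.neg_apply] using LinearMap.congr_fun₂ hB g f

theorem bilin_jacobi_of_single (B : (α →₀ R) →ₗ[R] (α →₀ R) →ₗ[R] (α →₀ R))
    (h : ∀ a b c, B (single a 1) (B (single b 1) (single c 1))
      + B (single c 1) (B (single a 1) (single b 1))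
      + B (single b 1) (B (single c 1) (single a 1)) = 0) (f g k : α →₀ R) :
    B f (B g k) + B k (B f g) + B g (B k f) = 0 := by
  induction f using Finsupp.induction_linear with
  | zero => simp
  | add f f' hf hf' =>
    simp only [map_add, LinearMap.add_apply]
    linear_combination (norm := abel) hf + hf'
  | single a x =>
  induction g using Finsupp.induction_linear with
  | zero => simp
  | add g g' hg hg' =>
    simp only [map_add, LinearMap.add_apply]
    linear_combination (norm := abel) hg + hg'
  | single b y =>
  induction k using Finsupp.induction_linear with
  | zero => simp
  | add k k' hk hk' =>
    simp only [map_add, LinearMap.add_apply]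
    linear_combination (norm := abel) hk + hk'
  | single c z =>
    rw [← smul_single_one a x, ← smul_single_one b y, ← smul_single_one c z]
    simp only [map_smul, LinearMap.smul_apply]
    linear_combination (norm := module) (x * y * z) • h a b c

end Finsupp

namespace Affinization

variable (p q μ : ℂ) (θ : ℤ)

noncomputable def basisBracket (a b : ℤ × ℤ) : ℤ × ℤ →₀ ℂ :=
  single (a + b) (((a.2 : ℂ) + q) * ((b.1 : ℂ) + p) - ((b.2 : ℂ) + q) * ((a.1 : ℂ) + p))
    + single (a + b + (θ, 0)) (((a.2 : ℂ) - b.2) * μ)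

noncomputable def bracketₗ : (ℤ × ℤ →₀ ℂ) →ₗ[ℂ] (ℤ × ℤ →₀ ℂ) →ₗ[ℂ] (ℤ × ℤ →₀ ℂ) :=
  linearCombination ℂ fun a => linearCombination ℂ (basisBracket p q μ θ a)

theorem mk_add_add_shift (a b : ℤ × ℤ) : (a.1 + b.1 + θ, a.2 + b.2) = a + b + (θ, 0) := by
  ext <;> simp

theorem bBracket_eq_bracketₗ (f g : ℤ × ℤ →₀ ℂ) :
    bBracket p q μ θ f g = bracketₗ p q μ θ f g := by
  simp only [bBracket, bracketₗ, basisBracket, linearCombination_apply,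
    LinearMap.finsupp_sum_apply, LinearMap.smul_apply, Finsupp.smul_sum, smul_add, smul_single,
    smul_eq_mul, mul_assoc, mk_add_add_shift]
  rfl

theorem bracketₗ_single_single (a b : ℤ × ℤ) (x y : ℂ) :
    bracketₗ p q μ θ (single a x) (single b y) = (x * y) • basisBracket p q μ θ a b := by
  simp [bracketₗ, mul_smul]

theorem basisBracket_swap (a b : ℤ × ℤ) :
    basisBracket p q μ θ b a = -basisBracket p q μ θ a b := by
  rw [basisBracket, basisBracket, neg_add, ← single_neg, ← single_neg, add_comm b a]
  congr 2 <;> ring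

theorem bracketₗ_antisymm (f g : ℤ × ℤ →₀ ℂ) :
    bracketₗ p q μ θ f g = -bracketₗ p q μ θ g f :=
  bilin_antisymm_of_single _ (fun a b => by
    simp only [bracketₗ_single_single, basisBracket_swap p q μ θ b a, one_mul, one_smul]) f g

theorem basisBracket_jacobi (a b c : ℤ × ℤ) :
    bracketₗ p q μ θ (single a 1) (basisBracket p q μ θ b c)
      + bracketₗ p q μ θ (single c 1) (basisBracket p q μ θ a b)
      + bracketₗ p q μ θ (single b 1) (basisBracket p q μ θ c a) = 0 := by
  simp only [basisBracket, map_add, bracketₗ_single_single, one_mul, smul_add, smul_single,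
    smul_eq_mul]
  rw [show a + (b + c) = a + b + c by abel, show c + (a + b) = a + b + c by abel,
    show b + (c + a) = a + b + c by abel,
    show a + (b + c + (θ, 0)) = a + b + c + (θ, 0) by abel,
    show c + (a + b + (θ, 0)) = a + b + c + (θ, 0) by abel,
    show b + (c + a + (θ, 0)) = a + b + c + (θ, 0) by abel]
  -- The three degrees coincide when `θ = 0`; splitting on all of them handles every case at once.
  ext n
  simp only [coe_add, Pi.add_apply, single_apply, coe_zero, Pi.zero_apply, Prod.fst_add,
    Prod.snd_add, Int.cast_add, Int.cast_zero]
  split_ifs <;> ring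

theorem bracketₗ_jacobi (f g k : ℤ × ℤ →₀ ℂ) :
    bracketₗ p q μ θ f (bracketₗ p q μ θ g k)
      + bracketₗ p q μ θ k (bracketₗ p q μ θ f g)
      + bracketₗ p q μ θ g (bracketₗ p q μ θ k f) = 0 :=
  bilin_jacobi_of_single _ (fun a b c => by
    simpa only [bracketₗ_single_single, one_mul, one_smul] using
      basisBracket_jacobi p q μ θ a b c) f g k

end Affinization

open Affinization in
/-- `𝓑(p,q,μ,θ)` is a Lie algebra: the bracket is bilinear, antisymmetric,
and satisfies the Jacobi identity. -/
theorem stmt3 (p q μ : ℂ) (θ : ℤ) :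
    (∀ f f' g : ℤ × ℤ →₀ ℂ,
      bBracket p q μ θ (f + f') g = bBracket p q μ θ f g + bBracket p q μ θ f' g) ∧
    (∀ f g g' : ℤ × ℤ →₀ ℂ,
      bBracket p q μ θ f (g + g') = bBracket p q μ θ f g + bBracket p q μ θ f g') ∧
    (∀ (c : ℂ) (f g : ℤ × ℤ →₀ ℂ),
      bBracket p q μ θ (c • f) g = c • bBracket p q μ θ f g ∧
      bBracket p q μ θ f (c • g) = c • bBracket p q μ θ f g) ∧
    (∀ f g : ℤ × ℤ →₀ ℂ, bBracket p q μ θ f g = - bBracket p q μ θ g f) ∧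
    (∀ f g h : ℤ × ℤ →₀ ℂ,
      bBracket p q μ θ f (bBracket p q μ θ g h)
        + bBracket p q μ θ h (bBracket p q μ θ f g)
        + bBracket p q μ θ g (bBracket p q μ θ h f) = 0) := by
  simp only [bBracket_eq_bracketₗ, map_add, map_smul, LinearMap.add_apply, LinearMap.smul_apply,
    implies_true, and_self, true_and]
  exact ⟨bracketₗ_antisymm p q μ θ, bracketₗ_jacobi p q μ θ⟩
end

section
/- The product x_α x_β = (β+p) x_{α+β} + μ x_{α+β+θ} on the ℂ-vector space with basis {x_α | α ∈ ℤ}, where p, μ ∈ ℂ and θ ∈ ℤ are fixed, defines a Novikov algebra structure, i.e. it satisfies (ab)c − a(bc) = (ba)c − b(ac) and (ab)c = (ac)b. -/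
/-!
Realise the basis vector `x_α` as the Laurent monomial `t^α`. With the Euler derivation
`∂ = t d/dt` (so `∂ t^β = β t^β`) and `h = p + μ t^θ`, the product is `a ∘ b = a (∂b + h b)`.
For any derivation `∂` of a commutative ring and any `h`, this product is Novikov
(Gelfand–Dorfman): `(a ∘ b) ∘ c = a (∂b + h b)(∂c + h c)` is symmetric in `b, c`, and by the
Leibniz rule `(a ∘ b) ∘ c - a ∘ (b ∘ c) = -a b ∂(∂c + h c)` is symmetric in `a, b`.
-/

/-- The Witt type product on the free `ℂ`-module with basis `{x_α | α ∈ ℤ}`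
(modelled as `ℤ →₀ ℂ`, `x_α = single α 1`):
`x_α x_β = (β+p) x_{α+β} + μ x_{α+β+θ}`. -/
noncomputable def wittMul (p μ : ℂ) (θ : ℤ) (f g : ℤ →₀ ℂ) : ℤ →₀ ℂ :=
  f.sum fun α x => g.sum fun β y =>
    Finsupp.single (α + β) (x * y * ((β : ℂ) + p))
      + Finsupp.single (α + β + θ) (x * y * μ)

section GelfandDorfman

variable {R A : Type*} [CommSemiring R] [CommRing A] [Algebra R A] (D : Derivation R A A) (h : A)

def gelfandDorfmanMul (a b : A) : A := a * (D b + h * b)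

local infixl:70 " ∘ " => gelfandDorfmanMul D h

theorem gelfandDorfmanMul_right_comm (a b c : A) : (a ∘ b) ∘ c = (a ∘ c) ∘ b := by
  simp only [gelfandDorfmanMul]
  ring

theorem gelfandDorfmanMul_assoc_symm (a b c : A) :
    (a ∘ b) ∘ c - a ∘ (b ∘ c) = (b ∘ a) ∘ c - b ∘ (a ∘ c) := by
  simp only [gelfandDorfmanMul, Derivation.leibniz, smul_eq_mul]
  ring

end GelfandDorfman

namespace AddMonoidAlgebra

variable {k M : Type*} [CommRing k] [AddCommMonoid M] (φ : M →+ k)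

noncomputable def gradingLinearMap : k[M] →ₗ[k] k[M] :=
  (basis M k).constr k fun m => single m (φ m)

theorem gradingLinearMap_single (m : M) (r : k) :
    gradingLinearMap φ (single m r) = single m (φ m * r) := by
  rw [← mul_one r, ← smul_single', ← basis_apply, map_smul, gradingLinearMap,
    Module.Basis.constr_basis, smul_single', mul_one, mul_comm]

theorem gradingLinearMap_mul (a b : k[M]) :
    gradingLinearMap φ (a * b) = a * gradingLinearMap φ b + b * gradingLinearMap φ a := by
  induction a using induction_linear with
  | zero => simp
  | add a a' ha ha' => rw [add_mul, map_add, ha, ha', map_add]; ring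
  | single m r =>
    induction b using induction_linear with
    | zero => simp
    | add b b' hb hb' => rw [mul_add, map_add, hb, hb', map_add]; ring
    | single n s =>
      simp only [single_mul_single, gradingLinearMap_single, map_add, add_comm n m,
        ← single_add]
      congr 1
      ring

noncomputable def gradingDerivation : Derivation k k[M] k[M] :=
  Derivation.mk' (gradingLinearMap φ) (gradingLinearMap_mul φ)

theorem gradingDerivation_single (m : M) (r : k) :
    gradingDerivation φ (single m r) = single m (φ m * r) :=
  gradingLinearMap_single φ m r

end AddMonoidAlgebra

open AddMonoidAlgebra

section Witt

variable (p μ : ℂ) (θ : ℤ)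

theorem wittMul_single_single (α β : ℤ) (x y : ℂ) :
    wittMul p μ θ (Finsupp.single α x) (Finsupp.single β y)
      = Finsupp.single (α + β) (x * y * ((β : ℂ) + p))
          + Finsupp.single (α + β + θ) (x * y * μ) := by
  simp [wittMul]

theorem wittMul_add_left (f f' g : ℤ →₀ ℂ) :
    wittMul p μ θ (f + f') g = wittMul p μ θ f g + wittMul p μ θ f' g := by
  refine Finsupp.sum_add_index' (fun _ => by simp) fun α x x' => ?_
  rw [← Finsupp.sum_add]
  exact Finsupp.sum_congr fun β _ => by simp only [add_mul, Finsupp.single_add]; abel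

theorem wittMul_add_right (f g g' : ℤ →₀ ℂ) :
    wittMul p μ θ f (g + g') = wittMul p μ θ f g + wittMul p μ θ f g' := by
  rw [wittMul, wittMul, wittMul, ← Finsupp.sum_add]
  refine Finsupp.sum_congr fun α _ => Finsupp.sum_add_index' (fun _ => by simp) fun β y y' => ?_
  simp only [mul_add, add_mul, Finsupp.single_add]
  abel

theorem ofCoeff_wittMul (f g : ℤ →₀ ℂ) :
    ofCoeff (wittMul p μ θ f g) = gelfandDorfmanMul (gradingDerivation (Int.castAddHom ℂ))
      (single 0 p + single θ μ) (ofCoeff f) (ofCoeff g) := by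
  induction f using Finsupp.induction_linear with
  | zero => simp [wittMul, gelfandDorfmanMul]
  | add f f' hf hf' =>
    rw [wittMul_add_left, ofCoeff_add, hf, hf', ofCoeff_add]
    simp only [gelfandDorfmanMul]
    ring
  | single α x =>
    induction g using Finsupp.induction_linear with
    | zero => simp [wittMul, gelfandDorfmanMul]
    | add g g' hg hg' =>
      rw [wittMul_add_right, ofCoeff_add, hg, hg', ofCoeff_add]
      simp only [gelfandDorfmanMul, map_add]
      ring
    | single β y =>
      simp only [wittMul_single_single, gelfandDorfmanMul, ofCoeff_add, ofCoeff_single,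
        gradingDerivation_single, add_mul, single_mul_single, mul_add]
      rw [zero_add, add_comm θ β, ← add_assoc, Int.coe_castAddHom, ← add_assoc, ← single_add]
      congr 2 <;> ring

end Witt

/-- The Witt type product is a Novikov algebra structure: it satisfies
left-symmetry `(ab)c − a(bc) = (ba)c − b(ac)` and right-commutativity `(ab)c = (ac)b`. -/
theorem stmt4 (p μ : ℂ) (θ : ℤ) :
    (∀ a b c : ℤ →₀ ℂ,
      wittMul p μ θ (wittMul p μ θ a b) c - wittMul p μ θ a (wittMul p μ θ b c)
        = wittMul p μ θ (wittMul p μ θ b a) c - wittMul p μ θ b (wittMul p μ θ a c)) ∧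
    (∀ a b c : ℤ →₀ ℂ,
      wittMul p μ θ (wittMul p μ θ a b) c = wittMul p μ θ (wittMul p μ θ a c) b) := by
  refine ⟨fun a b c => ofCoeff_injective ?_, fun a b c => ofCoeff_injective ?_⟩
  · simp only [ofCoeff_sub, ofCoeff_wittMul]
    exact gelfandDorfmanMul_assoc_symm _ _ _ _ _
  · simp only [ofCoeff_wittMul]
    exact gelfandDorfmanMul_right_comm _ _ _ _ _
end

section
/- The bracket on the span of {L_{α,i}, c | α ∈ ℤ, i ∈ ℤ, i ≥ 0} given by [L_{α,i}, L_{β,j}] = ((i+q)(β+p) − (j+q)(α+p)) L_{α+β,i+j} + δ_{α+β,0} δ_{i,0} δ_{j,0} (α³−α)/12 · c and [c, L_{α,i}] = 0 satisfies the Jacobi identity, so that 𝓑(p,q) is a Lie algebra for any fixed p, q ∈ ℂ*. -/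
/-!
The bracket depends only on the `L`-components and is bilinear in them, so antisymmetry and the
Jacobi identity reduce to basis elements; since the Jacobiator is cyclically symmetric, additivity
in its first argument is all that reduction needs. On basis elements the `L`-part of the Jacobi
identity is a polynomial identity in `α, β, γ, i, j, k, p, q`, and the central part is the cocycle
condition for `(α³ - α)/12`, the Virasoro cocycle.
-/

/-- The Block type Lie algebra `𝓑(p,q)`: underlying space is
`(ℤ × ℕ →₀ ℂ) × ℂ`, where `L_{α,i} = (single (α,i) 1, 0)` and the central
element `c = (0, 1)`.  The bracket is
`[L_{α,i}, L_{β,j}] = ((i+q)(β+p) − (j+q)(α+p)) L_{α+β,i+j}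
  + δ_{α+β,0} δ_{i,0} δ_{j,0} (α³−α)/12 · c`, with `c` central. -/
noncomputable def BpqBracket (p q : ℂ) (X Y : (ℤ × ℕ →₀ ℂ) × ℂ) : (ℤ × ℕ →₀ ℂ) × ℂ :=
  (X.1.sum fun a x => Y.1.sum fun b y =>
      Finsupp.single (a.1 + b.1, a.2 + b.2)
        (x * y * (((a.2 : ℂ) + q) * ((b.1 : ℂ) + p) - ((b.2 : ℂ) + q) * ((a.1 : ℂ) + p))),
    X.1.sum fun a x => Y.1.sum fun b y =>
      x * y * (if a.1 + b.1 = 0 ∧ a.2 = 0 ∧ b.2 = 0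
        then (((a.1 : ℂ)) ^ 3 - (a.1 : ℂ)) / 12 else 0))

section Jacobiator

variable {R α M : Type*} [CommRing R] [AddCommGroup M] [Module R M]
  (B : (α →₀ R) →ₗ[R] (α →₀ R) →ₗ[R] (α →₀ R) × M)

noncomputable def jacobiator (u v w : α →₀ R) : (α →₀ R) × M :=
  B u (B v w).1 + B w (B u v).1 + B v (B w u).1

theorem jacobiator_rotate (u v w : α →₀ R) : jacobiator B u v w = jacobiator B v w u := by
  simp only [jacobiator]
  abel

theorem jacobiator_add_left (u u' v w : α →₀ R) :
    jacobiator B (u + u') v w = jacobiator B u v w + jacobiator B u' v w := by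
  simp only [jacobiator, map_add, LinearMap.add_apply, Prod.fst_add]
  abel

theorem jacobiator_eq_zero_of_single_left {v w : α →₀ R}
    (h : ∀ a x, jacobiator B (Finsupp.single a x) v w = 0) (u : α →₀ R) :
    jacobiator B u v w = 0 := by
  induction u using Finsupp.induction_linear with
  | zero => simp [jacobiator]
  | add u u' hu hu' => rw [jacobiator_add_left, hu, hu', add_zero]
  | single a x => exact h a x

theorem jacobiator_eq_zero_of_single
    (h : ∀ a b c x y z, jacobiator B (Finsupp.single a x) (Finsupp.single b y)
      (Finsupp.single c z) = 0) (u v w : α →₀ R) :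
    jacobiator B u v w = 0 :=
  jacobiator_eq_zero_of_single_left B (fun a x => by
    rw [jacobiator_rotate]
    refine jacobiator_eq_zero_of_single_left B (fun b y => ?_) v
    rw [jacobiator_rotate]
    exact jacobiator_eq_zero_of_single_left B (fun c z => h c a b z x y) w) u

end Jacobiator

namespace BpqBracket

def coeff (p q : ℂ) (a b : ℤ × ℕ) : ℂ :=
  ((a.2 : ℂ) + q) * ((b.1 : ℂ) + p) - ((b.2 : ℂ) + q) * ((a.1 : ℂ) + p)

noncomputable def cocycle (a b : ℤ × ℕ) : ℂ :=
  if a.1 + b.1 = 0 ∧ a.2 = 0 ∧ b.2 = 0 then ((a.1 : ℂ) ^ 3 - a.1) / 12 else 0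

noncomputable def basis (p q : ℂ) (a b : ℤ × ℕ) : (ℤ × ℕ →₀ ℂ) × ℂ :=
  (Finsupp.single (a + b) (coeff p q a b), cocycle a b)

noncomputable def bilin (p q : ℂ) :
    (ℤ × ℕ →₀ ℂ) →ₗ[ℂ] (ℤ × ℕ →₀ ℂ) →ₗ[ℂ] (ℤ × ℕ →₀ ℂ) × ℂ :=
  Finsupp.linearCombination ℂ fun a => Finsupp.linearCombination ℂ (basis p q a)

theorem bilin_single (p q : ℂ) (a b : ℤ × ℕ) (x y : ℂ) :
    bilin p q (Finsupp.single a x) (Finsupp.single b y) = (x * y) • basis p q a b := by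
  simp [bilin, mul_smul]

theorem eq_bilin (p q : ℂ) (X Y : (ℤ × ℕ →₀ ℂ) × ℂ) :
    BpqBracket p q X Y = bilin p q X.1 Y.1 := by
  ext1 <;>
  simp only [BpqBracket, bilin, basis, coeff, cocycle, Finsupp.linearCombination_apply,
    Finsupp.sum, LinearMap.sum_apply, LinearMap.smul_apply, Prod.fst_sum, Prod.snd_sum,
    Prod.smul_fst, Prod.smul_snd, Finset.smul_sum, Finsupp.smul_single, smul_eq_mul, mul_assoc,
    ← Prod.mk_add_mk, Prod.mk.eta]

theorem coeff_swap (p q : ℂ) (a b : ℤ × ℕ) : coeff p q b a = -coeff p q a b := by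
  simp only [coeff]
  ring

theorem cocycle_swap (a b : ℤ × ℕ) : cocycle b a = -cocycle a b := by
  obtain ⟨α, i⟩ := a
  obtain ⟨β, j⟩ := b
  by_cases h : α + β = 0 ∧ i = 0 ∧ j = 0
  · obtain ⟨hαβ, rfl, rfl⟩ := h
    obtain rfl : β = -α := by omega
    simp only [cocycle, add_neg_cancel, neg_add_cancel, and_self, if_true]
    push_cast
    ring
  · have h' : ¬(β + α = 0 ∧ j = 0 ∧ i = 0) := by omega
    simp only [cocycle, if_neg h, if_neg h', neg_zero]

theorem basis_swap (p q : ℂ) (a b : ℤ × ℕ) : basis p q b a = -basis p q a b := by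
  simp only [basis, coeff_swap p q a b, cocycle_swap a b, add_comm b a, Finsupp.single_neg,
    Prod.neg_mk]

theorem bilin_swap (p q : ℂ) (u v : ℤ × ℕ →₀ ℂ) : bilin p q v u = -bilin p q u v := by
  have h : (bilin p q).flip = (bilin p q).compr₂ (-LinearMap.id) := by
    ext a b : 4
    simpa [bilin_single] using basis_swap p q a b
  simpa using LinearMap.congr_fun₂ h u v

theorem coeff_jacobi (p q : ℂ) (a b c : ℤ × ℕ) :
    coeff p q b c * coeff p q a (b + c) + coeff p q a b * coeff p q c (a + b)
      + coeff p q c a * coeff p q b (c + a) = 0 := by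
  simp only [coeff, Prod.fst_add, Prod.snd_add]
  push_cast
  ring

/- On the support of the cocycle (`α + β + γ = 0`, `i = j = k = 0`) the left side is `q/12` times
`(γ-β)(α³-α) + (β-α)(γ³-γ) + (α-γ)(β³-β) = (α-β)(β-γ)(γ-α)(α+β+γ)`. -/
theorem cocycle_jacobi (p q : ℂ) (a b c : ℤ × ℕ) :
    coeff p q b c * cocycle a (b + c) + coeff p q a b * cocycle c (a + b)
      + coeff p q c a * cocycle b (c + a) = 0 := by
  obtain ⟨α, i⟩ := a
  obtain ⟨β, j⟩ := b
  obtain ⟨γ, k⟩ := c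
  by_cases h : α + β + γ = 0 ∧ i = 0 ∧ j = 0 ∧ k = 0
  · obtain ⟨hαβγ, rfl, rfl, rfl⟩ := h
    obtain rfl : γ = -(α + β) := by omega
    simp only [coeff, cocycle, Prod.mk_add_mk, add_zero]
    rw [if_pos, if_pos, if_pos]
    · push_cast
      ring
    all_goals exact ⟨by ring, trivial, trivial⟩
  · simp only [cocycle, Prod.fst_add, Prod.snd_add]
    rw [if_neg (by omega), if_neg (by omega), if_neg (by omega)]
    ring

theorem basis_jacobi (p q : ℂ) (a b c : ℤ × ℕ) :
    coeff p q b c • basis p q a (b + c) + coeff p q a b • basis p q c (a + b)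
      + coeff p q c a • basis p q b (c + a) = 0 := by
  have hca : c + (a + b) = a + (b + c) := by abel
  have hbc : b + (c + a) = a + (b + c) := by abel
  ext1
  · simp only [basis, Prod.fst_add, Prod.smul_fst, Finsupp.smul_single, smul_eq_mul, hca, hbc,
      ← Finsupp.single_add, Prod.fst_zero, Finsupp.single_eq_zero]
    linear_combination coeff_jacobi p q a b c
  · simpa only [basis, Prod.snd_add, Prod.smul_snd, smul_eq_mul, Prod.snd_zero]
      using cocycle_jacobi p q a b c

theorem jacobiator_bilin (p q : ℂ) (u v w : ℤ × ℕ →₀ ℂ) : jacobiator (bilin p q) u v w = 0 := by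
  refine jacobiator_eq_zero_of_single _ (fun a b c x y z => ?_) u v w
  calc jacobiator (bilin p q) (Finsupp.single a x) (Finsupp.single b y) (Finsupp.single c z)
      = (x * y * z) • (coeff p q b c • basis p q a (b + c) + coeff p q a b • basis p q c (a + b)
          + coeff p q c a • basis p q b (c + a)) := by
        simp only [jacobiator, bilin_single, basis, Prod.smul_fst, Finsupp.smul_single, smul_eq_mul]
        module
    _ = 0 := by rw [basis_jacobi, smul_zero]

end BpqBracket

theorem stmt5_general (p q : ℂ) :
    (∀ X Y : (ℤ × ℕ →₀ ℂ) × ℂ, BpqBracket p q X Y = - BpqBracket p q Y X) ∧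
    (∀ (s : ℂ) (X : (ℤ × ℕ →₀ ℂ) × ℂ), BpqBracket p q (0, s) X = 0) ∧
    (∀ X Y Z : (ℤ × ℕ →₀ ℂ) × ℂ,
      BpqBracket p q X (BpqBracket p q Y Z)
        + BpqBracket p q Z (BpqBracket p q X Y)
        + BpqBracket p q Y (BpqBracket p q Z X) = 0) := by
  simp only [BpqBracket.eq_bilin]
  refine ⟨fun X Y => BpqBracket.bilin_swap p q Y.1 X.1, fun s X => by simp,
    fun X Y Z => BpqBracket.jacobiator_bilin p q X.1 Y.1 Z.1⟩

/-- The bracket of `𝓑(p,q)` is antisymmetric, central in `c`, and satisfies the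
Jacobi identity, so that `𝓑(p,q)` is a Lie algebra for any `p, q ∈ ℂ*`. -/
theorem stmt5 (p q : ℂ) (hp : p ≠ 0) (hq : q ≠ 0) :
    (∀ X Y : (ℤ × ℕ →₀ ℂ) × ℂ, BpqBracket p q X Y = - BpqBracket p q Y X) ∧
    (∀ (s : ℂ) (X : (ℤ × ℕ →₀ ℂ) × ℂ), BpqBracket p q (0, s) X = 0) ∧
    (∀ X Y Z : (ℤ × ℕ →₀ ℂ) × ℂ,
      BpqBracket p q X (BpqBracket p q Y Z)
        + BpqBracket p q Z (BpqBracket p q X Y)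
        + BpqBracket p q Y (BpqBracket p q Z X) = 0) :=
  stmt5_general p q
end

section
/- In the Block type Lie algebra 𝓑(p,q) with q ≠ 0, the elements L_α := q⁻¹ L_{α,0} for α ∈ ℤ together with k := q⁻² c span a subalgebra satisfying [L_α, L_β] = (β−α) L_{α+β} + δ_{α+β,0} (α³−α)/12 · k and [k, L_α] = 0; i.e., 𝓑(p,q) contains a subalgebra isomorphic to the Virasoro algebra. -/
theorem BpqBracket_single_single (p q : ℂ) (a b : ℤ × ℕ) (x y u v : ℂ) :
    BpqBracket p q (Finsupp.single a x, u) (Finsupp.single b y, v) =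
      (Finsupp.single (a.1 + b.1, a.2 + b.2)
          (x * y * (((a.2 : ℂ) + q) * ((b.1 : ℂ) + p) - ((b.2 : ℂ) + q) * ((a.1 : ℂ) + p))),
        x * y * (if a.1 + b.1 = 0 ∧ a.2 = 0 ∧ b.2 = 0
          then (((a.1 : ℂ)) ^ 3 - (a.1 : ℂ)) / 12 else 0)) := by
  simp only [BpqBracket, Finsupp.single_zero, mul_zero, zero_mul,
    Finsupp.sum_single_index]

theorem BpqBracket_central_left (p q u : ℂ) (Y : (ℤ × ℕ →₀ ℂ) × ℂ) :
    BpqBracket p q (0, u) Y = 0 := by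
  simp only [BpqBracket, Finsupp.sum_zero_index, Prod.mk_zero_zero]

/-- At level `i = j = 0` the structure constant `q (β + p) - q (α + p)` no longer involves `p`,
which is why rescaling by `q⁻¹` yields the Witt bracket. -/
theorem BpqBracket_single_zero_single_zero (p q : ℂ) (α β : ℤ) (x y : ℂ) :
    BpqBracket p q (Finsupp.single (α, 0) x, 0) (Finsupp.single (β, 0) y, 0) =
      (Finsupp.single (α + β, 0) (x * y * q * ((β : ℂ) - α)),
        x * y * (if α + β = 0 then ((α : ℂ) ^ 3 - α) / 12 else 0)) := by
  rw [BpqBracket_single_single]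
  simp only [Nat.cast_zero, zero_add, and_self, and_true]
  congr 2
  ring

theorem stmt6_general (p q : ℂ) (hq : q ≠ 0) :
    (∀ α β : ℤ,
      BpqBracket p q (Finsupp.single (α, 0) q⁻¹, 0) (Finsupp.single (β, 0) q⁻¹, 0)
        = ((β : ℂ) - (α : ℂ)) • ((Finsupp.single (α + β, 0) q⁻¹ : ℤ × ℕ →₀ ℂ), (0 : ℂ))
          + (if α + β = 0 then (((α : ℂ)) ^ 3 - (α : ℂ)) / 12 else 0)
            • ((0 : ℤ × ℕ →₀ ℂ), (q ^ 2)⁻¹)) ∧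
    (∀ α : ℤ,
      BpqBracket p q ((0 : ℤ × ℕ →₀ ℂ), (q ^ 2)⁻¹) (Finsupp.single (α, 0) q⁻¹, 0) = 0) := by
  refine ⟨fun α β => ?_, fun α => BpqBracket_central_left p q _ _⟩
  rw [BpqBracket_single_zero_single_zero]
  simp only [Prod.smul_mk, smul_zero, smul_eq_mul, Prod.mk_add_mk, add_zero,
    Finsupp.smul_single]
  congr 2
  · field_simp
  · ring

/-- For `q ≠ 0`, the elements `L_α := q⁻¹ L_{α,0}` together with `k := q⁻² c`
span a copy of the Virasoro algebra inside `𝓑(p,q)`: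
`[L_α, L_β] = (β−α) L_{α+β} + δ_{α+β,0} (α³−α)/12 · k` and `[k, L_α] = 0`. -/
theorem stmt6 (p q : ℂ) (hp : p ≠ 0) (hq : q ≠ 0) :
    (∀ α β : ℤ,
      BpqBracket p q (Finsupp.single (α, 0) q⁻¹, 0) (Finsupp.single (β, 0) q⁻¹, 0)
        = ((β : ℂ) - (α : ℂ)) • ((Finsupp.single (α + β, 0) q⁻¹ : ℤ × ℕ →₀ ℂ), (0 : ℂ))
          + (if α + β = 0 then (((α : ℂ)) ^ 3 - (α : ℂ)) / 12 else 0)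
            • ((0 : ℤ × ℕ →₀ ℂ), (q ^ 2)⁻¹)) ∧
    (∀ α : ℤ,
      BpqBracket p q ((0 : ℤ × ℕ →₀ ℂ), (q ^ 2)⁻¹) (Finsupp.single (α, 0) q⁻¹, 0) = 0) :=
  stmt6_general p q hq
end

section
/- For a, b ∈ ℂ, the ℂ-vector space with basis {v_μ | μ ∈ ℤ} is a 𝓑(p,q)-module under the action L_{α,0} v_μ = q(a + μ + bα) v_{α+μ}, L_{α,i} v_μ = 0 for i > 0, and c v_μ = 0 (the module A_{a,b} of the intermediate series). -/
/-- The action of `𝓑(p,q)` on the module `A_{a,b}` of the intermediate series,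
with basis `{v_μ | μ ∈ ℤ}` (modelled as `ℤ →₀ ℂ`, `v_μ = single μ 1`):
`L_{α,0} v_μ = q(a + μ + bα) v_{α+μ}`, `L_{α,i} v_μ = 0` for `i > 0`, `c v_μ = 0`. -/
noncomputable def actAab (q a b : ℂ) (X : (ℤ × ℕ →₀ ℂ) × ℂ) (v : ℤ →₀ ℂ) : ℤ →₀ ℂ :=
  X.1.sum fun l x => v.sum fun μ y =>
    if l.2 = 0
      then Finsupp.single (l.1 + μ) (x * y * (q * (a + (μ : ℂ) + b * (l.1 : ℂ))))
      else 0

/-!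
On the first component of `𝓑(p,q)` the action is the linear extension of
`L_{α,i} ↦ ρ(α,i)` (`basisOp`), where `ρ(α,0) v_μ = q(a + μ + bα) v_{α+μ}` and
`ρ(α,i) = 0` for `i > 0`.
Everything reduces to the commutation relation `⁅ρ(α,0), ρ(β,0)⁆ = q(β - α) ρ(α+β,0)`
on basis vectors, which is the polynomial identity
`(x + bβ)(x + β + bα) - (x + bα)(x + α + bβ) = (β - α)(x + b(α + β))` with `x = a + μ`;
the central term of the bracket acts by zero.
-/

namespace IntermediateSeries

variable {R : Type*} [CommRing R]

noncomputable def basisOp (q a b : R) (l : ℤ × ℕ) : Module.End R (ℤ →₀ R) :=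
  if l.2 = 0 then
    Finsupp.linearCombination R fun μ => Finsupp.single (l.1 + μ) (q * (a + μ + b * l.1))
  else 0

noncomputable def op (q a b : R) : (ℤ × ℕ →₀ R) →ₗ[R] Module.End R (ℤ →₀ R) :=
  Finsupp.linearCombination R (basisOp q a b)

noncomputable def bracketCoeff (p q : R) (l m : ℤ × ℕ) : R :=
  ((l.2 : R) + q) * ((m.1 : R) + p) - ((m.2 : R) + q) * ((l.1 : R) + p)

noncomputable def bracket (p q : R) : (ℤ × ℕ →₀ R) →ₗ[R] (ℤ × ℕ →₀ R) →ₗ[R] (ℤ × ℕ →₀ R) :=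
  Finsupp.linearCombination R fun l => Finsupp.linearCombination R fun m =>
    Finsupp.single (l.1 + m.1, l.2 + m.2) (bracketCoeff p q l m)

lemma basisOp_zero_single (q a b : R) (α μ : ℤ) (t : R) :
    basisOp q a b (α, 0) (Finsupp.single μ t)
      = Finsupp.single (α + μ) (t * (q * (a + μ + b * α))) := by
  simp only [basisOp, if_pos, Finsupp.linearCombination_single, Finsupp.smul_single, smul_eq_mul]

lemma basisOp_of_snd_ne_zero (q a b : R) {l : ℤ × ℕ} (hl : l.2 ≠ 0) : basisOp q a b l = 0 :=
  if_neg hl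

lemma basisOp_commutator (p q a b : R) (l m : ℤ × ℕ) (v : ℤ →₀ R) :
    basisOp q a b l (basisOp q a b m v) - basisOp q a b m (basisOp q a b l v)
      = bracketCoeff p q l m • basisOp q a b (l.1 + m.1, l.2 + m.2) v := by
  obtain ⟨α, i⟩ := l
  obtain ⟨β, j⟩ := m
  by_cases hij : i = 0 ∧ j = 0
  · obtain ⟨rfl, rfl⟩ := hij
    induction v using Finsupp.induction_linear with
    | zero => simp only [map_zero, sub_zero, smul_zero]
    | add v w hv hw =>
      simp only [map_add, smul_add, ← hv, ← hw]
      abel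
    | single μ t =>
      simp only [basisOp_zero_single, Nat.add_zero, Finsupp.smul_single, bracketCoeff]
      rw [add_left_comm β α μ, ← add_assoc α β μ, ← Finsupp.single_sub]
      congr 1
      push_cast
      ring
  · have hne : i + j ≠ 0 := by omega
    rw [basisOp_of_snd_ne_zero q a b (l := (α + β, i + j)) hne]
    rcases not_and_or.mp hij with hi | hj
    · simp only [basisOp_of_snd_ne_zero q a b (l := (α, i)) hi, LinearMap.zero_apply, map_zero,
        sub_zero, smul_zero]
    · simp only [basisOp_of_snd_ne_zero q a b (l := (β, j)) hj, LinearMap.zero_apply, map_zero,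
        sub_zero, smul_zero]

lemma op_bracket (p q a b : R) (f g : ℤ × ℕ →₀ R) (v : ℤ →₀ R) :
    op q a b (bracket p q f g) v = op q a b f (op q a b g v) - op q a b g (op q a b f v) := by
  induction f using Finsupp.induction_linear with
  | zero => simp
  | add f₁ f₂ h₁ h₂ =>
    simp only [map_add, LinearMap.add_apply, h₁, h₂]
    abel
  | single l r =>
    induction g using Finsupp.induction_linear with
    | zero => simp
    | add g₁ g₂ h₁ h₂ =>
      simp only [map_add, LinearMap.add_apply, h₁, h₂]
      abel
    | single m s =>
      simp only [bracket, op, Finsupp.linearCombination_single, LinearMap.smul_apply, map_smul,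
        ← basisOp_commutator p, smul_sub, smul_comm r s]

lemma actAab_eq_op (q a b : ℂ) (X : (ℤ × ℕ →₀ ℂ) × ℂ) (v : ℤ →₀ ℂ) :
    actAab q a b X v = op q a b X.1 v := by
  rw [actAab, op, Finsupp.linearCombination_apply, LinearMap.finsupp_sum_apply]
  refine Finsupp.sum_congr fun l _ => ?_
  by_cases hl : l.2 = 0
  · simp only [basisOp, hl, if_true, LinearMap.smul_apply, Finsupp.linearCombination_apply,
      Finsupp.smul_sum, Finsupp.smul_single, smul_eq_mul, mul_assoc]
  · simp [basisOp, hl]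

lemma BpqBracket_fst (p q : ℂ) (X Y : (ℤ × ℕ →₀ ℂ) × ℂ) :
    (BpqBracket p q X Y).1 = bracket p q X.1 Y.1 := by
  rw [BpqBracket, bracket, Finsupp.linearCombination_apply, LinearMap.finsupp_sum_apply]
  dsimp only
  refine Finsupp.sum_congr fun l _ => ?_
  simp only [LinearMap.smul_apply, Finsupp.linearCombination_apply, Finsupp.smul_sum,
    Finsupp.smul_single, smul_eq_mul, mul_assoc, bracketCoeff]

end IntermediateSeries

theorem stmt7_general (p q : ℂ) (a b : ℂ) :
    (∀ (X : (ℤ × ℕ →₀ ℂ) × ℂ) (v w : ℤ →₀ ℂ),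
      actAab q a b X (v + w) = actAab q a b X v + actAab q a b X w) ∧
    (∀ (X Y : (ℤ × ℕ →₀ ℂ) × ℂ) (v : ℤ →₀ ℂ),
      actAab q a b (X + Y) v = actAab q a b X v + actAab q a b Y v) ∧
    (∀ (c : ℂ) (X : (ℤ × ℕ →₀ ℂ) × ℂ) (v : ℤ →₀ ℂ),
      actAab q a b (c • X) v = c • actAab q a b X v ∧
      actAab q a b X (c • v) = c • actAab q a b X v) ∧
    (∀ (X Y : (ℤ × ℕ →₀ ℂ) × ℂ) (v : ℤ →₀ ℂ),
      actAab q a b (BpqBracket p q X Y) v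
        = actAab q a b X (actAab q a b Y v) - actAab q a b Y (actAab q a b X v)) := by
  refine ⟨fun X v w => ?_, fun X Y v => ?_, fun c X v => ⟨?_, ?_⟩, fun X Y v => ?_⟩
  · simp only [IntermediateSeries.actAab_eq_op, map_add]
  · simp only [IntermediateSeries.actAab_eq_op, Prod.fst_add, map_add, LinearMap.add_apply]
  · simp only [IntermediateSeries.actAab_eq_op, Prod.smul_fst, map_smul, LinearMap.smul_apply]
  · simp only [IntermediateSeries.actAab_eq_op, map_smul]
  · simp only [IntermediateSeries.actAab_eq_op, IntermediateSeries.BpqBracket_fst,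
      IntermediateSeries.op_bracket]

/-- `A_{a,b}` is a `𝓑(p,q)`-module: the action is additive and satisfies
`[X,Y]v = X(Yv) − Y(Xv)`. -/
theorem stmt7 (p q : ℂ) (hp : p ≠ 0) (hq : q ≠ 0) (a b : ℂ) :
    (∀ (X : (ℤ × ℕ →₀ ℂ) × ℂ) (v w : ℤ →₀ ℂ),
      actAab q a b X (v + w) = actAab q a b X v + actAab q a b X w) ∧
    (∀ (X Y : (ℤ × ℕ →₀ ℂ) × ℂ) (v : ℤ →₀ ℂ),
      actAab q a b (X + Y) v = actAab q a b X v + actAab q a b Y v) ∧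
    (∀ (c : ℂ) (X : (ℤ × ℕ →₀ ℂ) × ℂ) (v : ℤ →₀ ℂ),
      actAab q a b (c • X) v = c • actAab q a b X v ∧
      actAab q a b X (c • v) = c • actAab q a b X v) ∧
    (∀ (X Y : (ℤ × ℕ →₀ ℂ) × ℂ) (v : ℤ →₀ ℂ),
      actAab q a b (BpqBracket p q X Y) v
        = actAab q a b X (actAab q a b Y v) - actAab q a b Y (actAab q a b X v)) :=
  stmt7_general p q a b
end

section
/- In 𝓑(p,q), with z₁ = L_{−μ₀+1,0} and z₂ = L_{−μ₀,0} for a fixed integer μ₀ ≤ −1, and positive integers l₁, l₂ with α = l₁(1−μ₀) − l₂μ₀, the iterated bracket satisfies ad_{z₂}^{l₂−1} ad_{z₁}^{l₁}(z₂) = q^{l₁+l₂−1} · ∏_{i=1}^{l₁} (−(i−1)μ₀ + i − 2) · ∏_{j=1}^{l₂−1} (−(l₁+j−1)μ₀ + l₁) · L_{α,0}. -/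
/-! Every element in the iterated bracket is a multiple of some `L_{n,0}` with `n > 0`, so the
central term never occurs, and because all second indices vanish the `p`-terms cancel:
`[L_{β,0}, L_{γ,0}] = q (γ - β) L_{β+γ,0}`. Iterating this gives one factor of the products per
bracket. -/

lemma bpqBracket_single_single (p q : ℂ) {β γ : ℤ} (c : ℂ) (h : β + γ ≠ 0) :
    BpqBracket p q (Finsupp.single (β, 0) 1, 0) (Finsupp.single (γ, 0) c, 0)
      = (Finsupp.single (β + γ, 0) (c * (q * ((γ : ℂ) - β))), 0) := by
  simp only [BpqBracket, Finsupp.sum_single_index, zero_mul, one_mul, mul_zero,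
    Finsupp.single_zero, h, false_and, if_false]
  congr 2
  simp only [CharP.cast_eq_zero, zero_add, ← mul_sub, add_sub_add_right_eq_sub]

lemma bpqBracket_iterate_single (p q : ℂ) {β γ : ℤ} (hβ : 0 ≤ β) (hγ : 0 < γ) (c : ℂ)
    (k : ℕ) :
    (fun Y => BpqBracket p q (Finsupp.single (β, 0) 1, 0) Y)^[k] (Finsupp.single (γ, 0) c, 0)
      = (Finsupp.single (γ + k * β, 0)
          (c * q ^ k * ∏ i ∈ Finset.range k, ((γ : ℂ) + i * β - β)), 0) := by
  induction k with
  | zero => simp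
  | succ k ih =>
    have hpos : β + (γ + k * β) ≠ 0 := by positivity
    have hdeg : β + (γ + k * β) = γ + (k + 1 : ℕ) * β := by push_cast; ring
    rw [Function.iterate_succ_apply', ih, bpqBracket_single_single p q _ hpos, hdeg,
      Finset.prod_range_succ, pow_succ]
    congr 2
    push_cast
    ring

theorem stmt10_general (p q : ℂ)
    (μ₀ : ℤ) (hμ : μ₀ ≤ -1) (l₁ l₂ : ℕ) (hl₂ : 1 ≤ l₂)
    (α : ℤ) (hα : α = (l₁ : ℤ) * (1 - μ₀) - (l₂ : ℤ) * μ₀) :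
    (fun Y => BpqBracket p q (Finsupp.single (-μ₀, 0) 1, 0) Y)^[l₂ - 1]
        ((fun Y => BpqBracket p q (Finsupp.single (-μ₀ + 1, 0) 1, 0) Y)^[l₁]
          (Finsupp.single (-μ₀, 0) 1, 0))
      = (q ^ (l₁ + l₂ - 1)
          * (∏ i ∈ Finset.range l₁, (-(i : ℂ) * (μ₀ : ℂ) + (i : ℂ) - 1))
          * (∏ j ∈ Finset.range (l₂ - 1), (-((l₁ : ℂ) + (j : ℂ)) * (μ₀ : ℂ) + (l₁ : ℂ))))
        • ((Finsupp.single (α, 0) 1 : ℤ × ℕ →₀ ℂ), (0 : ℂ)) := by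
  obtain ⟨m, rfl⟩ : ∃ m, l₂ = m + 1 := ⟨l₂ - 1, by omega⟩
  have hpos : 0 < -μ₀ + l₁ * (-μ₀ + 1) := by nlinarith
  have hdeg : -μ₀ + l₁ * (-μ₀ + 1) + m * (-μ₀) = α := by rw [hα]; push_cast; ring
  simp only [Nat.add_sub_cancel]
  rw [bpqBracket_iterate_single p q (by omega) (by omega) 1 l₁,
    bpqBracket_iterate_single p q (by omega) hpos _ m, Prod.smul_mk,
    Finsupp.smul_single, smul_zero, smul_eq_mul, mul_one, ← add_assoc,
    Nat.add_sub_cancel, pow_add, hdeg]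
  have hfactor₁ (i : ℕ) : ((-μ₀ : ℤ) : ℂ) + i * ((-μ₀ + 1 : ℤ) : ℂ) - ((-μ₀ + 1 : ℤ) : ℂ)
      = -(i : ℂ) * μ₀ + i - 1 := by push_cast; ring
  have hfactor₂ (j : ℕ) : ((-μ₀ + l₁ * (-μ₀ + 1) : ℤ) : ℂ) + j * ((-μ₀ : ℤ) : ℂ) - ((-μ₀ : ℤ) : ℂ)
      = -((l₁ : ℂ) + j) * μ₀ + l₁ := by push_cast; ring
  simp only [hfactor₁, hfactor₂, one_mul]
  congr 2
  ring

/-- In `𝓑(p,q)`, with `z₁ = L_{−μ₀+1,0}` and `z₂ = L_{−μ₀,0}` for a fixed integer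
`μ₀ ≤ −1`, and positive integers `l₁, l₂` with `α = l₁(1−μ₀) − l₂μ₀`, one has
`ad_{z₂}^{l₂−1} ad_{z₁}^{l₁}(z₂)
  = q^{l₁+l₂−1} ∏_{i=1}^{l₁} (−(i−1)μ₀+i−2) ∏_{j=1}^{l₂−1} (−(l₁+j−1)μ₀+l₁) · L_{α,0}`. -/
theorem stmt10 (p q : ℂ) (hp : p ≠ 0) (hq : q ≠ 0)
    (μ₀ : ℤ) (hμ : μ₀ ≤ -1) (l₁ l₂ : ℕ) (hl₁ : 1 ≤ l₁) (hl₂ : 1 ≤ l₂)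
    (α : ℤ) (hα : α = (l₁ : ℤ) * (1 - μ₀) - (l₂ : ℤ) * μ₀) :
    (fun Y => BpqBracket p q (Finsupp.single (-μ₀, 0) 1, 0) Y)^[l₂ - 1]
        ((fun Y => BpqBracket p q (Finsupp.single (-μ₀ + 1, 0) 1, 0) Y)^[l₁]
          (Finsupp.single (-μ₀, 0) 1, 0))
      = (q ^ (l₁ + l₂ - 1)
          * (∏ i ∈ Finset.range l₁, (-(i : ℂ) * (μ₀ : ℂ) + (i : ℂ) - 1))
          * (∏ j ∈ Finset.range (l₂ - 1), (-((l₁ : ℂ) + (j : ℂ)) * (μ₀ : ℂ) + (l₁ : ℂ))))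
        • ((Finsupp.single (α, 0) 1 : ℤ × ℕ →₀ ℂ), (0 : ℂ)) :=
  stmt10_general p q μ₀ hμ l₁ l₂ hl₂ α hα
end
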